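/- arXiv:1405.6513 — 4 statements merged into one kernel-verified Lean document; each statement's English description precedes it below -/
import Mathlib

section
/- Let n be even and n' ≥ 1; set S = {1,…,n} × {1,…,n'}. Let β_1 > β_2 > ⋯ > β_n be rationals with β_{n+1−i} = −β_i, and β'_1 > ⋯ > β'_{n'} rationals with β'_{n'+1−j} = −β'_j. Assume β_i + β'_j ≠ 0 for all (i,j) ∈ S. Set p̃ := min{ |β_i − β'_j| : (i,j) ∈ S, β_i ≥ 0, β'_j ≥ 0 }, and let d̃, d̃' be rationals with ã := d̃ − d̃'. Define b̃_i := β_i + d̃ (1 ≤ i ≤ n) and b̃_{n+j} := β'_j + d̃' (1 ≤ j ≤ n'). If |ã| < p̃, then #{ (i,j) ∈ S : b̃_i < b̃_{n+j} } = nn'/2. -/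
/-!
The reflection `(i, j) ↦ (n + 1 - i, n' + 1 - j)` of `S` negates every `β_i` and `β'_j`.
By the symmetry of the parameters, the minimal gap `p̃` over nonnegative pairs bounds
`|β_i - β'_j|` for all pairs, so `|ã| < |β_i - β'_j|` everywhere; then `β_i + d̃ < β'_j + d̃'`
holds exactly when it fails for the reflected pair. The reflection is thus an involution of
`S` exchanging the counted pairs with their complement, and these are half of `S`.
-/

open Finset

theorem Finset.two_mul_card_filter_of_involution {α : Type*} {s : Finset α} {P : α → Prop}
    [DecidablePred P] (σ : α → α) (hσ : Set.MapsTo σ s s) (hσσ : ∀ x ∈ s, σ (σ x) = x)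
    (hP : ∀ x ∈ s, P (σ x) ↔ ¬ P x) :
    2 * #(s.filter P) = #s := by
  have hswap : #(s.filter P) = #(s.filter fun x ↦ ¬ P x) := by
    refine card_nbij' σ σ ?_ ?_ ?_ ?_
    · intro x hx
      rw [coe_filter] at hx ⊢
      exact ⟨hσ hx.1, fun hσx ↦ (hP x hx.1).mp hσx hx.2⟩
    · intro x hx
      rw [coe_filter] at hx ⊢
      exact ⟨hσ hx.1, (hP x hx.1).mpr hx.2⟩
    · exact fun x hx ↦ hσσ x (mem_filter.mp hx).1
    · exact fun x hx ↦ hσσ x (mem_filter.mp hx).1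
  rw [two_mul]
  nth_rw 2 [hswap]
  exact card_filter_add_card_filter_not P

section OrderedGroup

variable {α : Type*} [AddCommGroup α] [LinearOrder α] [IsOrderedAddMonoid α]

theorem le_abs_sub_of_le_abs_sub_of_nonneg {A B : Set α} {p : α}
    (hA : ∀ x ∈ A, -x ∈ A) (hB : ∀ y ∈ B, -y ∈ B)
    (h : ∀ x ∈ A, ∀ y ∈ B, 0 ≤ x → 0 ≤ y → p ≤ |x - y|) {x y : α} (hx : x ∈ A) (hy : y ∈ B) :
    p ≤ |x - y| := by
  have abs_mem {C : Set α} (hC : ∀ z ∈ C, -z ∈ C) {z : α} (hz : z ∈ C) : |z| ∈ C := by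
    rcases abs_choice z with h | h <;> rw [h]
    exacts [hz, hC z hz]
  calc p ≤ |(|x| - |y|)| := h _ (abs_mem hA hx) _ (abs_mem hB hy) (abs_nonneg x) (abs_nonneg y)
    _ ≤ |x - y| := abs_abs_sub_abs_le_abs_sub x y

theorem neg_add_lt_neg_add_iff_not_lt_of_abs_sub_lt {x y d d' : α} (h : |d - d'| < |x - y|) :
    -x + d < -y + d' ↔ ¬ x + d < y + d' := by
  have hneg : -x + d < -y + d' ↔ y - x < -(d - d') := by
    rw [← sub_pos, ← sub_pos (a := -(d - d'))]; abel_nf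
  have hpos : x + d < y + d' ↔ d - d' < y - x := by
    rw [← sub_pos, ← sub_pos (a := y - x)]; abel_nf
  rw [hneg, hpos]
  rw [abs_sub_comm x y] at h
  rcases lt_abs.mp h with hu | hu
  · exact iff_of_false ((neg_le_abs _).trans hu.le).not_gt
      (not_not.mpr ((le_abs_self _).trans_lt hu))
  · exact iff_of_true (lt_neg.mpr ((le_abs_self _).trans_lt hu))
      (neg_lt_neg_iff.mp ((neg_le_abs _).trans_lt hu)).not_gt

end OrderedGroup

theorem add_one_sub_mem_Icc_one {n i : ℕ} (hi : i ∈ Icc 1 n) : n + 1 - i ∈ Icc 1 n := by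
  rw [mem_Icc] at hi ⊢
  omega

theorem neg_mem_image_Icc_one {G : Type*} [Neg G] {n : ℕ} {f : ℕ → G}
    (hf : ∀ i, 1 ≤ i → i ≤ n → f (n + 1 - i) = -f i) :
    ∀ x ∈ f '' Icc 1 n, -x ∈ f '' Icc 1 n := by
  rintro _ ⟨i, hi, rfl⟩
  have hi' := mem_Icc.mp hi
  exact ⟨n + 1 - i, add_one_sub_mem_Icc_one hi, hf i hi'.1 hi'.2⟩

theorem stmt_8_general (n n' : ℕ)
    (β β' : ℕ → ℚ) (dt dt' p : ℚ)
    (hβsym : ∀ i, 1 ≤ i → i ≤ n → β (n + 1 - i) = -β i)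
    (hβ'sym : ∀ j, 1 ≤ j → j ≤ n' → β' (n' + 1 - j) = -β' j)
    (hp1 : ∀ i j, 1 ≤ i → i ≤ n → 1 ≤ j → j ≤ n' →
      0 ≤ β i → 0 ≤ β' j → p ≤ |β i - β' j|)
    (ha : |dt - dt'| < p) :
    ((Finset.Icc 1 n ×ˢ Finset.Icc 1 n').filter
        (fun q : ℕ × ℕ => β q.1 + dt < β' q.2 + dt')).card = n * n' / 2 := by
  have gap : ∀ i ∈ Icc 1 n, ∀ j ∈ Icc 1 n', |dt - dt'| < |β i - β' j| := by
    refine fun i hi j hj ↦ ha.trans_le ?_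
    refine le_abs_sub_of_le_abs_sub_of_nonneg (neg_mem_image_Icc_one hβsym) (neg_mem_image_Icc_one hβ'sym) ?_
      ⟨i, hi, rfl⟩ ⟨j, hj, rfl⟩
    rintro _ ⟨i, hi, rfl⟩ _ ⟨j, hj, rfl⟩
    rw [coe_Icc, Set.mem_Icc] at hi hj
    exact hp1 i j hi.1 hi.2 hj.1 hj.2
  refine (Nat.div_eq_of_eq_mul_right two_pos ?_).symm
  rw [show n * n' = #(Icc 1 n ×ˢ Icc 1 n') by simp]
  refine (two_mul_card_filter_of_involution (fun q ↦ (n + 1 - q.1, n' + 1 - q.2)) ?_ ?_ ?_).symm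
  · intro q hq
    rw [coe_product, Set.mem_prod, mem_coe, mem_coe] at hq ⊢
    exact ⟨add_one_sub_mem_Icc_one hq.1, add_one_sub_mem_Icc_one hq.2⟩
  · intro q hq
    rw [mem_product, mem_Icc, mem_Icc] at hq
    ext <;> dsimp only <;> omega
  · intro q hq
    rw [mem_product] at hq
    have hi := mem_Icc.mp hq.1
    have hj := mem_Icc.mp hq.2
    rw [hβsym _ hi.1 hi.2, hβ'sym _ hj.1 hj.2]
    exact neg_add_lt_neg_add_iff_not_lt_of_abs_sub_lt (gap _ hq.1 _ hq.2)

/-- Lemma 'Laenge' (a) of Appendix 1: with `n` even, antisymmetric strictly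
decreasing `β`, `β'`, disjointness `β_i + β'_j ≠ 0`, minimal gap `p̃`, and
`|ã| < p̃` for `ã = d̃ − d̃'`, the number of pairs `(i,j)` with
`β_i + d̃ < β'_j + d̃'` is exactly `nn'/2`. -/
theorem stmt_8 (n n' : ℕ) (hn : 0 < n) (hne : Even n) (hn' : 0 < n')
    (β β' : ℕ → ℚ) (dt dt' p : ℚ)
    (hβdec : ∀ i, 1 ≤ i → i < n → β (i + 1) < β i)
    (hβ'dec : ∀ j, 1 ≤ j → j < n' → β' (j + 1) < β' j)
    (hβsym : ∀ i, 1 ≤ i → i ≤ n → β (n + 1 - i) = -β i)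
    (hβ'sym : ∀ j, 1 ≤ j → j ≤ n' → β' (n' + 1 - j) = -β' j)
    (hdisj : ∀ i j, 1 ≤ i → i ≤ n → 1 ≤ j → j ≤ n' → β i + β' j ≠ 0)
    (hp1 : ∀ i j, 1 ≤ i → i ≤ n → 1 ≤ j → j ≤ n' →
      0 ≤ β i → 0 ≤ β' j → p ≤ |β i - β' j|)
    (hp2 : ∃ i j, 1 ≤ i ∧ i ≤ n ∧ 1 ≤ j ∧ j ≤ n' ∧
      0 ≤ β i ∧ 0 ≤ β' j ∧ p = |β i - β' j|)
    (ha : |dt - dt'| < p) :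
    ((Finset.Icc 1 n ×ˢ Finset.Icc 1 n').filter
        (fun q : ℕ × ℕ => β q.1 + dt < β' q.2 + dt')).card = n * n' / 2 :=
  stmt_8_general n n' β β' dt dt' p hβsym hβ'sym hp1 ha
end

section
/- With notation as follows: n even, n' ≥ 1, S = {1,…,n}×{1,…,n'}, rationals β_1 > ⋯ > β_n with β_{n+1−i} = −β_i, rationals β'_1 > ⋯ > β'_{n'} with β'_{n'+1−j} = −β'_j, all β_i + β'_j ≠ 0, p̃ = min{|β_i − β'_j| : β_i ≥ 0, β'_j ≥ 0}, ã = d̃ − d̃', b̃_i = β_i + d̃, b̃_{n+j} = β'_j + d̃'. Then: (b) if ã > p̃ then #{(i,j) ∈ S : b̃_i < b̃_{n+j}} < nn'/2; and (c) if ã < −p̃ then #{(i,j) ∈ S : b̃_i < b̃_{n+j}} > nn'/2. -/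
/-!
The condition `b̃_i < b̃_{n+j}` reads `β i - β' j < c` with `c = dt' - dt`. The reflection
`(i, j) ↦ (n + 1 - i, n' + 1 - j)` of `S` negates `β i - β' j`, so it maps the pairs with
`β i - β' j < c` into those with `β i - β' j > -c`. When `c < -p`, these two sets are disjoint
and both miss the pair realising `p` together with its reflection, which is a different pair since
`n` is even; hence fewer than half of the pairs satisfy `β i - β' j < c`. The case `c > p` is the
same argument applied to the complementary set.
-/

open Finset

section Involution

variable {α : Type*} [DecidableEq α] {S : Finset α} {σ : α → α}

theorem two_mul_card_filter_add_two_le_card (hσS : ∀ q ∈ S, σ q ∈ S)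
    (hσσ : ∀ q ∈ S, σ (σ q) = q) (P : α → Prop) [DecidablePred P]
    (hP : ∀ q ∈ S, P q → ¬P (σ q)) {q₀ : α} (hq₀ : q₀ ∈ S) (hσq₀ : σ q₀ ≠ q₀)
    (hPq₀ : ¬P q₀) (hPσq₀ : ¬P (σ q₀)) :
    2 * #(S.filter P) + 2 ≤ #S := by
  set A := S.filter P
  have hinj : Set.InjOn σ A := fun a ha b hb hab => by
    rw [← hσσ a (mem_filter.1 ha).1, hab, hσσ b (mem_filter.1 hb).1]
  have himage : A.image σ ⊆ S.filter (¬P ·) := by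
    simp only [subset_iff, mem_image, mem_filter, A]
    rintro _ ⟨q, ⟨hqS, hPq⟩, rfl⟩
    exact ⟨hσS q hqS, hP q hqS hPq⟩
  have hpair : {q₀, σ q₀} ⊆ S.filter (¬P ·) := by
    simp only [insert_subset_iff, singleton_subset_iff, mem_filter]
    exact ⟨⟨hq₀, hPq₀⟩, hσS q₀ hq₀, hPσq₀⟩
  -- `σ q = q₀` would force `q = σ q₀`, and `σ q = σ q₀` would force `q = q₀`; neither satisfies `P`.
  have hdisj : Disjoint (A.image σ) {q₀, σ q₀} := by
    simp only [disjoint_right, mem_insert, mem_singleton, mem_image, mem_filter, A]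
    rintro _ (h | h) ⟨q, ⟨hqS, hPq⟩, hq⟩ <;> rw [h] at hq
    · have : q = σ q₀ := by rw [← hσσ q hqS, hq]
      exact hPσq₀ (this ▸ hPq)
    · have : q = q₀ := by rw [← hσσ q hqS, hq, hσσ q₀ hq₀]
      exact hPq₀ (this ▸ hPq)
  have hle := card_le_card (union_subset himage hpair)
  rw [card_union_of_disjoint hdisj, card_image_of_injOn hinj, card_pair hσq₀.symm] at hle
  have hsplit : #A + #(S.filter (¬P ·)) = #S := card_filter_add_card_filter_not P
  omega

variable {R : Type*} [AddCommGroup R] [LinearOrder R] [IsOrderedAddMonoid R] {f : α → R}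

theorem two_mul_card_filter_lt_add_two_le_card (hσS : ∀ q ∈ S, σ q ∈ S)
    (hσσ : ∀ q ∈ S, σ (σ q) = q) (hf : ∀ q ∈ S, f (σ q) = -f q) {q₀ : α} (hq₀ : q₀ ∈ S)
    (hσq₀ : σ q₀ ≠ q₀) {c : R} (hc : c < -|f q₀|) :
    2 * #(S.filter (f · < c)) + 2 ≤ #S := by
  have hc₀ : c < 0 := hc.trans_le (neg_nonpos.2 (abs_nonneg _))
  refine two_mul_card_filter_add_two_le_card hσS hσσ _ (fun q hq hfq => ?_) hq₀ hσq₀ ?_ ?_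
  · rw [hf q hq, not_lt]
    exact (hc₀.trans (neg_pos.2 (hfq.trans hc₀))).le
  · exact not_lt.2 (hc.le.trans (neg_abs_le _))
  · rw [hf q₀ hq₀, not_lt]
    exact hc.le.trans (neg_le_neg (le_abs_self _))

theorem two_mul_card_filter_not_lt_add_two_le_card (hσS : ∀ q ∈ S, σ q ∈ S)
    (hσσ : ∀ q ∈ S, σ (σ q) = q) (hf : ∀ q ∈ S, f (σ q) = -f q) {q₀ : α} (hq₀ : q₀ ∈ S)
    (hσq₀ : σ q₀ ≠ q₀) {c : R} (hc : |f q₀| < c) :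
    2 * #(S.filter (¬f · < c)) + 2 ≤ #S := by
  have hc₀ : 0 < c := (abs_nonneg _).trans_lt hc
  refine two_mul_card_filter_add_two_le_card hσS hσσ _ (fun q hq hfq => ?_) hq₀ hσq₀ ?_ ?_
  · rw [hf q hq, not_not]
    exact (neg_neg_of_pos (hc₀.trans_le (not_lt.1 hfq))).trans hc₀
  · exact not_not.2 ((le_abs_self _).trans_lt hc)
  · rw [hf q₀ hq₀, not_not]
    exact (neg_le_abs _).trans_lt hc

end Involution

section Reflection

variable {n n' : ℕ} {q : ℕ × ℕ}

def reflect (n n' : ℕ) (q : ℕ × ℕ) : ℕ × ℕ := (n + 1 - q.1, n' + 1 - q.2)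

theorem reflect_mem (hq : q ∈ Icc 1 n ×ˢ Icc 1 n') : reflect n n' q ∈ Icc 1 n ×ˢ Icc 1 n' := by
  simp only [mem_product, mem_Icc, reflect] at hq ⊢
  omega

theorem reflect_reflect (hq : q ∈ Icc 1 n ×ˢ Icc 1 n') : reflect n n' (reflect n n' q) = q := by
  simp only [mem_product, mem_Icc] at hq
  simp only [reflect, Prod.ext_iff]
  omega

theorem reflect_ne_self (hn : Even n) (hq : q ∈ Icc 1 n ×ˢ Icc 1 n') : reflect n n' q ≠ q := by
  obtain ⟨r, rfl⟩ := hn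
  simp only [mem_product, mem_Icc] at hq
  simp only [reflect, ne_eq, Prod.ext_iff]
  omega

end Reflection

theorem stmt_9_general (n n' : ℕ) (hne : Even n)
    (β β' : ℕ → ℚ) (dt dt' p : ℚ)
    (hβsym : ∀ i, 1 ≤ i → i ≤ n → β (n + 1 - i) = -β i)
    (hβ'sym : ∀ j, 1 ≤ j → j ≤ n' → β' (n' + 1 - j) = -β' j)
    (hp2 : ∃ i j, 1 ≤ i ∧ i ≤ n ∧ 1 ≤ j ∧ j ≤ n' ∧
      0 ≤ β i ∧ 0 ≤ β' j ∧ p = |β i - β' j|) :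
    (p < dt - dt' →
      ((Finset.Icc 1 n ×ˢ Finset.Icc 1 n').filter
        (fun q : ℕ × ℕ => β q.1 + dt < β' q.2 + dt')).card < n * n' / 2) ∧
    (dt - dt' < -p →
      n * n' / 2 < ((Finset.Icc 1 n ×ˢ Finset.Icc 1 n').filter
        (fun q : ℕ × ℕ => β q.1 + dt < β' q.2 + dt')).card) := by
  obtain ⟨i₀, j₀, hi₀, hi₀n, hj₀, hj₀n, -, -, rfl⟩ := hp2
  set S := Icc 1 n ×ˢ Icc 1 n'
  have hq₀ : (i₀, j₀) ∈ S := by simp [S, hi₀, hi₀n, hj₀, hj₀n]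
  set f : ℕ × ℕ → ℚ := fun q => β q.1 - β' q.2
  have hf : ∀ q ∈ S, f (reflect n n' q) = -f q := by
    intro q hq
    simp only [S, mem_product, mem_Icc] at hq
    simp only [f, reflect, hβsym q.1 hq.1.1 hq.1.2, hβ'sym q.2 hq.2.1 hq.2.2]
    ring
  have hcount : S.filter (fun q => β q.1 + dt < β' q.2 + dt') =
      S.filter (fun q => f q < dt' - dt) :=
    filter_congr fun q _ => by constructor <;> intro h <;> linarith
  have hS : #S = n * n' := by simp [S]
  have hsplit := card_filter_add_card_filter_not (s := S) (fun q => f q < dt' - dt)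
  rw [hcount]
  refine ⟨fun hlt => ?_, fun hgt => ?_⟩
  · have : 2 * #(S.filter (f · < dt' - dt)) + 2 ≤ #S :=
      two_mul_card_filter_lt_add_two_le_card (fun _ => reflect_mem) (fun _ => reflect_reflect)
        hf hq₀ (reflect_ne_self hne hq₀) (by linarith)
    omega
  · have : 2 * #(S.filter (¬f · < dt' - dt)) + 2 ≤ #S :=
      two_mul_card_filter_not_lt_add_two_le_card (fun _ => reflect_mem) (fun _ => reflect_reflect)
        hf hq₀ (reflect_ne_self hne hq₀) (by linarith)
    omega

/-- Lemma 'Laenge' (b) and (c) of Appendix 1: in the same setting as part (a),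
if `ã > p̃` then the inversion count is `< nn'/2`, and if `ã < −p̃` it is
`> nn'/2`. -/
theorem stmt_9 (n n' : ℕ) (hn : 0 < n) (hne : Even n) (hn' : 0 < n')
    (β β' : ℕ → ℚ) (dt dt' p : ℚ)
    (hβdec : ∀ i, 1 ≤ i → i < n → β (i + 1) < β i)
    (hβ'dec : ∀ j, 1 ≤ j → j < n' → β' (j + 1) < β' j)
    (hβsym : ∀ i, 1 ≤ i → i ≤ n → β (n + 1 - i) = -β i)
    (hβ'sym : ∀ j, 1 ≤ j → j ≤ n' → β' (n' + 1 - j) = -β' j)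
    (hdisj : ∀ i j, 1 ≤ i → i ≤ n → 1 ≤ j → j ≤ n' → β i + β' j ≠ 0)
    (hp1 : ∀ i j, 1 ≤ i → i ≤ n → 1 ≤ j → j ≤ n' →
      0 ≤ β i → 0 ≤ β' j → p ≤ |β i - β' j|)
    (hp2 : ∃ i j, 1 ≤ i ∧ i ≤ n ∧ 1 ≤ j ∧ j ≤ n' ∧
      0 ≤ β i ∧ 0 ≤ β' j ∧ p = |β i - β' j|) :
    (p < dt - dt' →
      ((Finset.Icc 1 n ×ˢ Finset.Icc 1 n').filter
        (fun q : ℕ × ℕ => β q.1 + dt < β' q.2 + dt')).card < n * n' / 2) ∧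
    (dt - dt' < -p →
      n * n' / 2 < ((Finset.Icc 1 n ×ˢ Finset.Icc 1 n').filter
        (fun q : ℕ × ℕ => β q.1 + dt < β' q.2 + dt')).card) :=
  stmt_9_general n n' hne β β' dt dt' p hβsym hβ'sym hp2
end

section
/- Let n, n' be odd positive integers and N = n + n'. Let μ = (μ_1,…,μ_n) ∈ ℤ^n and μ' = (μ'_1,…,μ'_{n'}) ∈ ℤ^{n'} be pure weights with abelian parts d = μ_{(n+1)/2} and d' = μ'_{(n'+1)/2} (the middle entries), and suppose d − d' = −N/2 — note this forces N even. Let ρ_N = ((N−1)/2, (N−3)/2, …, (1−N)/2) and let μ⊗μ' = (μ_1,…,μ_n,μ'_1,…,μ'_{n'}) ∈ (½ℤ)^N. Then the entries of μ⊗μ' + ρ_N at positions (n+1)/2 and n + (n'+1)/2 are equal; consequently there is no permutation w ∈ S_N such that w⁻¹(μ⊗μ' + ρ_N) is strictly decreasing, i.e. no w for which w⁻¹·(μ⊗μ') is a dominant weight. -/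
open Function

theorem not_exists_perm_strictAnti_comp {ι α : Type*} [LinearOrder ι] [Preorder α] {f : ι → α}
    (hf : ¬ Injective f) : ¬ ∃ w : Equiv.Perm ι, StrictAnti (f ∘ w) := by
  rintro ⟨w, hw⟩
  have hinj : Injective ((f ∘ w) ∘ w.symm) := hw.injective.comp w.symm.injective
  exact hf (by simpa [comp_assoc] using hinj)

theorem stmt_11_general (n n' : ℕ) (hn : Odd n) (hn' : Odd n')
    (μ μ' : ℕ → ℤ)
    (hd : 2 * (μ ((n + 1) / 2) - μ' ((n' + 1) / 2)) = -((n : ℤ) + n'))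
    (entry : ℕ → ℚ)
    (hentry : ∀ k, 1 ≤ k → k ≤ n + n' →
      entry k = (if k ≤ n then (μ k : ℚ) else (μ' (k - n) : ℚ))
        + (((n : ℚ) + n') + 1) / 2 - k) :
    entry ((n + 1) / 2) = entry (n + (n' + 1) / 2) ∧
    ¬ ∃ w : Equiv.Perm (Fin (n + n')), ∀ i j : Fin (n + n'), i < j →
        entry ((w j : ℕ) + 1) < entry ((w i : ℕ) + 1) := by
  set m := (n + 1) / 2
  set m' := (n' + 1) / 2
  have hm : 2 * m = n + 1 := Nat.two_mul_div_two_of_even hn.add_one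
  have hm' : 2 * m' = n' + 1 := Nat.two_mul_div_two_of_even hn'.add_one
  -- The two entries differ by `μ m - μ' m' + (n + n') / 2`, which vanishes by `hd`.
  have heq : entry m = entry (n + m') := by
    rw [hentry m (by omega) (by omega), hentry (n + m') (by omega) (by omega),
      if_pos (by omega), if_neg (by omega), Nat.add_sub_cancel_left]
    have hmq : (2 : ℚ) * m = n + 1 := by exact_mod_cast hm
    have hmq' : (2 : ℚ) * m' = n' + 1 := by exact_mod_cast hm'
    have hdq : (2 : ℚ) * (μ m - μ' m') = -(n + n') := by exact_mod_cast hd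
    push_cast
    linarith
  refine ⟨heq, not_exists_perm_strictAnti_comp (f := fun i : Fin (n + n') => entry (i + 1)) ?_⟩
  refine not_injective_iff.mpr ⟨⟨m - 1, by omega⟩, ⟨n + m' - 1, by omega⟩, ?_, ?_⟩
  · simpa [Nat.sub_add_cancel (show 1 ≤ m by omega),
      Nat.sub_add_cancel (show 1 ≤ n + m' by omega)] using heq
  · simp only [ne_eq, Fin.mk.injEq]
    omega

/-- Appendix 2, Proposition part (5): for `n`, `n'` odd and pure weights `μ`, `μ'`
with middle entries (abelian parts) `d`, `d'` satisfying `d − d' = −N/2`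
(`N = n + n'`), the entries of `μ⊗μ' + ρ_N` at positions `(n+1)/2` and
`n + (n'+1)/2` coincide, so no permutation makes `μ⊗μ' + ρ_N` strictly
decreasing, i.e. no `w` with `w⁻¹·(μ⊗μ')` dominant. -/
theorem stmt_11 (n n' : ℕ) (hn : Odd n) (hn' : Odd n')
    (μ μ' : ℕ → ℤ)
    (hpure : ∀ i, 1 ≤ i → i ≤ n → μ i + μ (n + 1 - i) = 2 * μ ((n + 1) / 2))
    (hpure' : ∀ j, 1 ≤ j → j ≤ n' →
      μ' j + μ' (n' + 1 - j) = 2 * μ' ((n' + 1) / 2))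
    (hd : 2 * (μ ((n + 1) / 2) - μ' ((n' + 1) / 2)) = -((n : ℤ) + n'))
    (entry : ℕ → ℚ)
    (hentry : ∀ k, 1 ≤ k → k ≤ n + n' →
      entry k = (if k ≤ n then (μ k : ℚ) else (μ' (k - n) : ℚ))
        + (((n : ℚ) + n') + 1) / 2 - k) :
    entry ((n + 1) / 2) = entry (n + (n' + 1) / 2) ∧
    ¬ ∃ w : Equiv.Perm (Fin (n + n')), ∀ i j : Fin (n + n'), i < j →
        entry ((w j : ℕ) + 1) < entry ((w i : ℕ) + 1) :=
  stmt_11_general n n' hn hn' μ μ' hd entry hentry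
end

section
/- Let N = n + n' and regard weights of the Levi GL_n × GL_{n'} as pairs; let ρ_N = ((N−1)/2, …, (1−N)/2) ∈ (½ℤ)^N. Define the twisted action of w ∈ S_N on λ ∈ ℤ^N by w·λ := w(λ + ρ_N) − ρ_N (where permutations act by permuting coordinates). Let w_N ∈ S_N be the longest element (w_N(i) = N+1−i), and w_M ∈ S_N the block-longest element (reversing {1,…,n} and {n+1,…,N} separately). Suppose w ∈ S_N and λ ∈ ℤ^N satisfy w·λ = (μ, μ') for μ ∈ ℤ^n, μ' ∈ ℤ^{n'}. Let λ^∨ := −w_N(λ) and for a block weight μ let μ^∨ := −w_n(μ) (reversal and negation). Then (w_M w w_N)·(λ^∨) = (μ^∨ − n'·𝟏_n, μ'^∨ + n·𝟏_{n'}), where 𝟏_m denotes the all-ones vector of length m. -/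
/-!
Write `m = w⁻¹ (w_M k)`. Since `w_N` and `w_M` are involutions, `(w_M w w_N)⁻¹ k = w_N m`, so the
`k`-th entry of `(w_M w w_N)·λ^∨` is `-λ_m + ρ(w_N m) - ρ_k`. Now `ρ_i + ρ_j = N - 1 - (i + j)`: for
`j = w_N i` this vanishes (`w_N ρ = -ρ`), and for `j = w_M i` it is the constant `n'` on the first block
and `-n` on the second. Hence the entry equals `-(λ_m + ρ_m - ρ(w_M k)) - (ρ(w_M k) + ρ_k)`, which is
the negated `(w_M k)`-th entry of `w·λ` shifted by `-n'` or `+n`.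
-/

namespace Equiv.Perm

theorem inv_apply_of_involutive {α : Type*} {σ : Perm α} (hσ : Function.Involutive σ) (x : α) :
    σ⁻¹ x = σ x := by
  rw [inv_def, Function.Involutive.symm_eq_self_of_involutive σ hσ]

end Equiv.Perm

section Reversal

variable {N : ℕ}

theorem involutive_of_val_eq_rev {σ : Equiv.Perm (Fin N)}
    (hσ : ∀ k : Fin N, (σ k : ℕ) = N - 1 - k) : Function.Involutive σ := fun k => by
  have := hσ (σ k)
  have := hσ k
  omega

theorem involutive_of_val_eq_blockRev {n n' : ℕ} {σ : Equiv.Perm (Fin (n + n'))}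
    (hσ : ∀ k : Fin (n + n'),
      (σ k : ℕ) = if (k : ℕ) < n then n - 1 - k else 2 * n + n' - 1 - k) :
    Function.Involutive σ := fun k => by
  have := hσ (σ k)
  have := hσ k
  split_ifs at * <;> omega

theorem rho_add_rho {ρ : Fin N → ℚ} (hρ : ∀ k : Fin N, ρ k = ((N : ℚ) - 1) / 2 - k)
    {i j : Fin N} {s : ℕ} (hs : (i : ℕ) + j + 1 = s) : ρ i + ρ j = N - s := by
  have : (i : ℚ) + j + 1 = s := by exact_mod_cast hs
  rw [hρ, hρ]
  linarith

end Reversal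

theorem stmt_18_general (n n' : ℕ)
    (lam : Fin (n + n') → ℤ) (μ μ' : ℕ → ℤ)
    (w wN wM : Equiv.Perm (Fin (n + n')))
    (hwN : ∀ k : Fin (n + n'), (wN k : ℕ) = n + n' - 1 - (k : ℕ))
    (hwM : ∀ k : Fin (n + n'),
      (wM k : ℕ) = if (k : ℕ) < n then n - 1 - (k : ℕ)
        else 2 * n + n' - 1 - (k : ℕ))
    (ρ : Fin (n + n') → ℚ)
    (hρ : ∀ k : Fin (n + n'), ρ k = (((n : ℚ) + n') - 1) / 2 - (k : ℕ))
    (h : ∀ k : Fin (n + n'),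
      (lam (w⁻¹ k) : ℚ) + ρ (w⁻¹ k) - ρ k
        = if (k : ℕ) < n then (μ (k : ℕ) : ℚ) else (μ' ((k : ℕ) - n) : ℚ)) :
    ∀ k : Fin (n + n'),
      (-(lam (wN ((wM * w * wN)⁻¹ k))) : ℚ)
          + ρ ((wM * w * wN)⁻¹ k) - ρ k
        = if (k : ℕ) < n then (-(μ (n - 1 - (k : ℕ))) : ℚ) - (n' : ℚ)
          else (-(μ' (n' - 1 - ((k : ℕ) - n))) : ℚ) + (n : ℚ) := by
  intro k
  have hN := involutive_of_val_eq_rev hwN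
  have hM := involutive_of_val_eq_blockRev hwM
  have hρ' : ∀ k : Fin (n + n'), ρ k = (((n + n' : ℕ) : ℚ) - 1) / 2 - k := by
    simpa only [Nat.cast_add] using hρ
  have hμ := h (wM k)
  set m := w⁻¹ (wM k)
  have hinv : (wM * w * wN)⁻¹ k = wN m := by
    simp only [mul_inv_rev, Equiv.Perm.mul_apply, Equiv.Perm.inv_apply_of_involutive hN,
      Equiv.Perm.inv_apply_of_involutive hM, m]
  have hρN := rho_add_rho hρ' (i := wN m) (j := m) (s := n + n') (by rw [hwN]; omega)
  have hMk := hwM k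
  rw [hinv, hN]
  split_ifs at hμ hMk ⊢ with hkn hMkn hMkn <;> try omega
  · have hρM := rho_add_rho hρ' (i := wM k) (j := k) (s := n) (by omega)
    rw [show n - 1 - (k : ℕ) = wM k by omega]
    push_cast at hρN hρM
    linarith
  · have hρM := rho_add_rho hρ' (i := wM k) (j := k) (s := 2 * n + n') (by omega)
    rw [show n' - 1 - ((k : ℕ) - n) = wM k - n by omega]
    push_cast at hρN hρM
    linarith

/-- Lemma on `w^∨`: with the twisted Weyl action `w·λ = w(λ + ρ_N) − ρ_N`
(permutations acting on vectors by `(σ v)_k = v_{σ⁻¹ k}`), if `w·λ = (μ, μ')`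
then `(w_M w w_N)·(λ^∨) = (μ^∨ − n'·𝟏_n, μ'^∨ + n·𝟏_{n'})`, where `w_N` is the
longest element of `S_N`, `w_M` the block-longest element of the Levi,
`λ^∨ = −w_N(λ)` and `μ^∨`, `μ'^∨` the reversed negated block weights. -/
theorem stmt_18 (n n' : ℕ) (hn : 0 < n) (hn' : 0 < n')
    (lam : Fin (n + n') → ℤ) (μ μ' : ℕ → ℤ)
    (w wN wM : Equiv.Perm (Fin (n + n')))
    (hwN : ∀ k : Fin (n + n'), (wN k : ℕ) = n + n' - 1 - (k : ℕ))
    (hwM : ∀ k : Fin (n + n'),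
      (wM k : ℕ) = if (k : ℕ) < n then n - 1 - (k : ℕ)
        else 2 * n + n' - 1 - (k : ℕ))
    (ρ : Fin (n + n') → ℚ)
    (hρ : ∀ k : Fin (n + n'), ρ k = (((n : ℚ) + n') - 1) / 2 - (k : ℕ))
    (h : ∀ k : Fin (n + n'),
      (lam (w⁻¹ k) : ℚ) + ρ (w⁻¹ k) - ρ k
        = if (k : ℕ) < n then (μ (k : ℕ) : ℚ) else (μ' ((k : ℕ) - n) : ℚ)) :
    ∀ k : Fin (n + n'),
      (-(lam (wN ((wM * w * wN)⁻¹ k))) : ℚ)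
          + ρ ((wM * w * wN)⁻¹ k) - ρ k
        = if (k : ℕ) < n then (-(μ (n - 1 - (k : ℕ))) : ℚ) - (n' : ℚ)
          else (-(μ' (n' - 1 - ((k : ℕ) - n))) : ℚ) + (n : ℚ) :=
  stmt_18_general n n' lam μ μ' w wN wM hwN hwM ρ hρ h
end
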